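/- Let d ≥ 1, μ ∈ ℝ, and k ≥ 1 an integer. For every real polynomial P in d variables, L_μ[(1−‖x‖²)^k P] = 4k(μ+k)(1−‖x‖²)^{k−1} P + (1−‖x‖²)^k [−(4k(μ+k)+2kd) P + L_{μ+2k} P], as an identity of polynomials. -/
import Mathlib


open MvPolynomial

/-- The Laplacian `Δ = ∑ ∂²/∂xᵢ²` acting on polynomials in `d` variables. -/
noncomputable def lap {d : ℕ} (P : MvPolynomial (Fin d) ℝ) : MvPolynomial (Fin d) ℝ :=
  ∑ i, pderiv i (pderiv i P)

/-- The Euler operator `⟨x,∇⟩ = ∑ xᵢ ∂/∂xᵢ` acting on polynomials in `d` variables. -/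
noncomputable def eulerOp {d : ℕ} (P : MvPolynomial (Fin d) ℝ) : MvPolynomial (Fin d) ℝ :=
  ∑ i, X i * pderiv i P

/-- The operator `L_μ P = ΔP − ⟨x,∇⟩²P − (2μ+d)⟨x,∇⟩P`. -/
noncomputable def Lop (d : ℕ) (μ : ℝ) (P : MvPolynomial (Fin d) ℝ) : MvPolynomial (Fin d) ℝ :=
  lap P - eulerOp (eulerOp P) - (2 * μ + (d : ℝ)) • eulerOp P

/-- The polynomial `‖x‖² = x₁² + ⋯ + x_d²`. -/
noncomputable def normSq (d : ℕ) : MvPolynomial (Fin d) ℝ := ∑ i, X i ^ 2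

variable {d : ℕ}

lemma pderiv_normSq (i : Fin d) : pderiv i (normSq d) = C 2 * X i := by
  unfold normSq
  rw [map_sum, Finset.sum_eq_single i]
  · rw [pderiv_pow, pderiv_X_self]; push_cast; rw [map_ofNat]; ring
  · intro j _ hj; rw [pderiv_pow, pderiv_X_of_ne hj]; ring
  · simp

lemma eulerOp_add (P Q : MvPolynomial (Fin d) ℝ) :
    eulerOp (P + Q) = eulerOp P + eulerOp Q := by
  unfold eulerOp; rw [← Finset.sum_add_distrib]
  exact Finset.sum_congr rfl fun i _ => by rw [map_add]; ring

lemma eulerOp_sub (P Q : MvPolynomial (Fin d) ℝ) :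
    eulerOp (P - Q) = eulerOp P - eulerOp Q := by
  unfold eulerOp; rw [← Finset.sum_sub_distrib]
  exact Finset.sum_congr rfl fun i _ => by rw [map_sub]; ring

lemma eulerOp_mul (P Q : MvPolynomial (Fin d) ℝ) :
    eulerOp (P * Q) = P * eulerOp Q + Q * eulerOp P := by
  unfold eulerOp; rw [Finset.mul_sum, Finset.mul_sum, ← Finset.sum_add_distrib]
  exact Finset.sum_congr rfl fun i _ => by rw [pderiv_mul]; ring

lemma eulerOp_C (r : ℝ) : eulerOp (C r : MvPolynomial (Fin d) ℝ) = 0 := by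
  unfold eulerOp; simp [pderiv_C]

lemma eulerOp_one : eulerOp (1 : MvPolynomial (Fin d) ℝ) = 0 := by
  rw [← map_one C]; exact eulerOp_C 1

lemma eulerOp_smul (r : ℝ) (P : MvPolynomial (Fin d) ℝ) :
    eulerOp (r • P) = r • eulerOp P := by
  rw [smul_eq_C_mul, smul_eq_C_mul, eulerOp_mul, eulerOp_C]; ring

lemma eulerOp_normSq : eulerOp (normSq d) = C 2 * normSq d := by
  unfold eulerOp
  rw [show C (2:ℝ) * normSq d = ∑ i, C 2 * X i ^2 by rw [normSq, Finset.mul_sum]]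
  exact Finset.sum_congr rfl fun i _ => by rw [pderiv_normSq]; ring

lemma lap_add (P Q : MvPolynomial (Fin d) ℝ) : lap (P + Q) = lap P + lap Q := by
  unfold lap; rw [← Finset.sum_add_distrib]
  exact Finset.sum_congr rfl fun i _ => by rw [map_add, map_add]

lemma lap_sub (P Q : MvPolynomial (Fin d) ℝ) : lap (P - Q) = lap P - lap Q := by
  unfold lap; rw [← Finset.sum_sub_distrib]
  exact Finset.sum_congr rfl fun i _ => by rw [map_sub, map_sub]

lemma lap_C (r : ℝ) : lap (C r : MvPolynomial (Fin d) ℝ) = 0 := by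
  unfold lap; simp [pderiv_C]

lemma lap_one : lap (1 : MvPolynomial (Fin d) ℝ) = 0 := by
  rw [← map_one C]; exact lap_C 1

lemma lap_mul (P Q : MvPolynomial (Fin d) ℝ) :
    lap (P * Q) = P * lap Q + C 2 * ∑ i, pderiv i P * pderiv i Q + Q * lap P := by
  unfold lap
  rw [Finset.mul_sum, Finset.mul_sum, Finset.mul_sum, ← Finset.sum_add_distrib,
    ← Finset.sum_add_distrib]
  refine Finset.sum_congr rfl fun i _ => ?_
  rw [pderiv_mul, map_add, pderiv_mul, pderiv_mul, map_ofNat]; ring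

lemma lap_normSq : lap (normSq d) = C (2 * (d:ℝ)) := by
  unfold lap
  have : ∀ i : Fin d, pderiv i (pderiv i (normSq d)) = C (2:ℝ) := by
    intro i; rw [pderiv_normSq, pderiv_C_mul, pderiv_X_self, mul_one]
  rw [Finset.sum_congr rfl fun i _ => this i, Finset.sum_const, Finset.card_fin,
    nsmul_eq_mul]
  rw [← map_natCast (C (σ := Fin d)) d, ← map_mul, mul_comm]

lemma cross_term (P : MvPolynomial (Fin d) ℝ) :
    ∑ i, pderiv i (1 - normSq d) * pderiv i P = -(C 2 * eulerOp P) := by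
  unfold eulerOp
  rw [Finset.mul_sum, ← Finset.sum_neg_distrib]
  refine Finset.sum_congr rfl fun i _ => ?_
  rw [map_sub, pderiv_one, pderiv_normSq]; ring

lemma eulerOp_zero : eulerOp (0 : MvPolynomial (Fin d) ℝ) = 0 := by
  unfold eulerOp; simp

lemma eulerOp_neg (P : MvPolynomial (Fin d) ℝ) : eulerOp (-P) = -eulerOp P := by
  unfold eulerOp; simp [Finset.sum_neg_distrib]

lemma lap_zero : lap (0 : MvPolynomial (Fin d) ℝ) = 0 := by
  unfold lap; simp

lemma base (μ : ℝ) (P : MvPolynomial (Fin d) ℝ) :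
    Lop d μ ((1 - normSq d) * P) =
      (4 * (μ + 1)) • P +
        (1 - normSq d) * ((-(4 * (μ + 1) + 2 * (d:ℝ))) • P + Lop d (μ + 2) P) := by
  unfold Lop
  simp only [lap_mul, lap_add, lap_sub, lap_zero, lap_C, lap_one, lap_normSq, cross_term,
    eulerOp_mul, eulerOp_add, eulerOp_sub, eulerOp_neg, eulerOp_zero, eulerOp_one,
    eulerOp_C, eulerOp_normSq, eulerOp_smul]
  simp only [smul_eq_C_mul, map_add, map_mul, map_neg, map_ofNat, map_one]
  ring

/-- `L_μ[(1−‖x‖²)^k P] = 4k(μ+k)(1−‖x‖²)^{k−1} P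
+ (1−‖x‖²)^k [−(4k(μ+k)+2kd) P + L_{μ+2k} P]`. -/
theorem stmt4 (d : ℕ) (hd : 1 ≤ d) (μ : ℝ) (k : ℕ) (hk : 1 ≤ k)
    (P : MvPolynomial (Fin d) ℝ) :
    Lop d μ ((1 - normSq d) ^ k * P) =
      (4 * (k : ℝ) * (μ + (k : ℝ))) • ((1 - normSq d) ^ (k - 1) * P) +
        (1 - normSq d) ^ k *
          ((-(4 * (k : ℝ) * (μ + (k : ℝ)) + 2 * (k : ℝ) * (d : ℝ))) • P
            + Lop d (μ + 2 * (k : ℝ)) P) := by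
  obtain ⟨m, rfl⟩ : ∃ m, k = m + 1 := ⟨k - 1, (Nat.succ_pred_eq_of_pos hk).symm⟩
  clear hk
  induction m generalizing μ P with
  | zero =>
      have h := base (d := d) μ P
      simp only [Nat.cast_one, zero_add, pow_one, pow_zero, one_mul, Nat.add_sub_cancel]
      rw [show μ + 2 * (1:ℝ) = μ + 2 by ring,
        show (4:ℝ) * 1 * (μ + 1) = 4 * (μ + 1) by ring,
        show (2:ℝ) * 1 * (d:ℝ) = 2 * (d:ℝ) by ring]
      simp only [Nat.sub_self, pow_zero, one_mul]
      exact h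
  | succ n ih =>
      have h1 : (1 - normSq d) ^ (n + 1 + 1) * P
          = (1 - normSq d) ^ (n + 1) * ((1 - normSq d) * P) := by ring
      rw [h1, ih μ ((1 - normSq d) * P), base (μ + 2 * ((n+1 : ℕ) : ℝ)) P,
        show μ + 2 * ((n+1 : ℕ) : ℝ) + 2 = μ + 2 * ((n+1+1 : ℕ) : ℝ) by push_cast; ring]
      simp only [Nat.add_sub_cancel, smul_eq_C_mul, map_add, map_mul, map_neg, map_ofNat,
        map_one, map_natCast]
      push_cast
      ring
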